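/- For a compositional translation τ from SYNCSIMPLE to LOCKSIMPLE with k = 1 lock and initial store IS, if τ is correct then both τ(!) and τ(?) (viewed as sequences of P_1/T_1 operations) either start with P_1 or contain the factor P_1 P_1 (two adjacent occurrences of P_1). -/
import Mathlib


/-- Symbols of SYNCSIMPLE: `!` (bang) and `?` (ques). -/
inductive SSym | bang | ques
deriving DecidableEq

/-- A SYNCSIMPLE subprocess: a string over {!,?} ending with `0` (false) or `✓` (true). -/
abbrev SSub := List SSym × Bool

/-- A SYNCSIMPLE process: a multiset of subprocesses. -/
abbrev SProc := Multiset SSub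

/-- The SYS reduction: a leading `!` and a leading `?` of two subprocesses are consumed. -/
def SysStep (P Q : SProc) : Prop :=
  ∃ (u1 u2 : List SSym) (b1 b2 : Bool) (R : SProc),
    P = (SSym.bang :: u1, b1) ::ₘ (SSym.ques :: u2, b2) ::ₘ R ∧
    Q = (u1, b1) ::ₘ (u2, b2) ::ₘ R

/-- A process is successful if it contains the subprocess `✓`. -/
def SSuccessful (P : SProc) : Prop := (([], true) : SSub) ∈ P

def SMayConv (P : SProc) : Prop :=
  ∃ Q, Relation.ReflTransGen SysStep P Q ∧ SSuccessful Q

def SMustConv (P : SProc) : Prop :=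
  ∀ Q, Relation.ReflTransGen SysStep P Q → SMayConv Q

/-- Lock operations: put `P_i` and take `T_i`. -/
inductive LOp | put | take
deriving DecidableEq

abbrev LSym (k : ℕ) := LOp × Fin k
abbrev LSub (k : ℕ) := List (LSym k) × Bool
abbrev LProc (k : ℕ) := Multiset (LSub k)
/-- The store of `k` locks: `true` = full (■), `false` = empty (□). -/
abbrev Store (k : ℕ) := Fin k → Bool

/-- LOCKSIMPLE step: `P_i` fills an empty lock `i` (blocks if full);
    `T_i` empties lock `i` and never blocks. -/
def LockStep {k : ℕ} : (LProc k × Store k) → (LProc k × Store k) → Prop :=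
  fun s t => ∃ (i : Fin k) (u : List (LSym k)) (b : Bool) (R : LProc k),
    ((s.1 = ((LOp.put, i) :: u, b) ::ₘ R ∧ s.2 i = false ∧
      t.1 = (u, b) ::ₘ R ∧ t.2 = Function.update s.2 i true) ∨
     (s.1 = ((LOp.take, i) :: u, b) ::ₘ R ∧
      t.1 = (u, b) ::ₘ R ∧ t.2 = Function.update s.2 i false))

def LSuccessful {k : ℕ} (s : LProc k × Store k) : Prop := (([], true) : LSub k) ∈ s.1

def LMayConv {k : ℕ} (s : LProc k × Store k) : Prop :=
  ∃ t, Relation.ReflTransGen LockStep s t ∧ LSuccessful t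

def LMustConv {k : ℕ} (s : LProc k × Store k) : Prop :=
  ∀ t, Relation.ReflTransGen LockStep s t → LMayConv t

/-- The compositional translation determined by the strings `tb = τ(!)` and `tq = τ(?)`,
    applied to a subprocess. -/
def transSub {k : ℕ} (tb tq : List (LSym k)) (u : SSub) : LSub k :=
  (u.1.flatMap (fun c => match c with | SSym.bang => tb | SSym.ques => tq), u.2)

/-- The compositional translation applied to a process. -/
def transProc {k : ℕ} (tb tq : List (LSym k)) (P : SProc) : LProc k :=
  P.map (transSub tb tq)

/-- Correctness of the compositional translation `(tb, tq)` with initial store `IS`: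
    may- and must-convergence are preserved and reflected. -/
def Correct {k : ℕ} (IS : Store k) (tb tq : List (LSym k)) : Prop :=
  ∀ P : SProc,
    (SMayConv P ↔ LMayConv (transProc tb tq P, IS)) ∧
    (SMustConv P ↔ LMustConv (transProc tb tq P, IS))

/-- The solo execution of the string `s` from store `IS` reaches the point where
    `(put, i) :: rest` remains and deadlocks there since lock `i` is full. -/
def SoloBlocked {k : ℕ} (IS : Store k) (s : List (LSym k)) (i : Fin k)
    (rest : List (LSym k)) : Prop :=
  ∃ C : Store k,
    Relation.ReflTransGen LockStep (({(s, false)} : LProc k), IS)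
      (({((LOp.put, i) :: rest, false)} : LProc k), C) ∧
    C i = true

/-- Blocking type `P_i`: the blocking prefix is `R P_i` with `R` free of `P_i, T_i`. -/
def BlockingTypeP {k : ℕ} (IS : Store k) (s : List (LSym k)) (i : Fin k) : Prop :=
  ∃ r rest, s = r ++ (LOp.put, i) :: rest ∧ (∀ x ∈ r, x.2 ≠ i) ∧
    SoloBlocked IS s i rest

/-- Blocking type `P_i P_i`: the blocking prefix is `R₁ P_i R₂ P_i` with
    `R₂` free of `P_i, T_i`, deadlocking exactly before the last `P_i`. -/
def BlockingTypePP {k : ℕ} (IS : Store k) (s : List (LSym k)) (i : Fin k) : Prop :=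
  ∃ r1 r2 rest, s = r1 ++ (LOp.put, i) :: r2 ++ (LOp.put, i) :: rest ∧
    (∀ x ∈ r2, x.2 ≠ i) ∧ SoloBlocked IS s i rest

/-- For one lock: the string starts with `P_1` or contains the factor `P_1 P_1`. -/
def StartsPutOrPP (s : List (LSym 1)) : Prop :=
  (∃ u, s = (LOp.put, (0 : Fin 1)) :: u) ∨
  (∃ r1 r2, s = r1 ++ (LOp.put, (0 : Fin 1)) :: (LOp.put, (0 : Fin 1)) :: r2)

lemma no_sysstep_singleton (x : SSub) (Q : SProc) : ¬ SysStep {x} Q := by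
  rintro ⟨u1, u2, b1, b2, R, hP, -⟩
  have := congrArg Multiset.card hP
  simp [Multiset.card_cons] at this

lemma not_smay_single (u : List SSym) (hu : u ≠ []) :
    ¬ SMayConv ({(u, true)} : SProc) := by
  rintro ⟨Q, hQ, hs⟩
  rcases hQ.cases_head with h | ⟨c, hc, -⟩
  · subst h
    simp [SSuccessful] at hs
    exact hu hs
  · exact no_sysstep_singleton _ _ hc

lemma not_lmay (IS : Store 1) (tb tq : List (LSym 1)) (h : Correct IS tb tq)
    (u : List SSym) (hu : u ≠ []) :
    ¬ LMayConv ((transProc tb tq {(u, true)} : LProc 1), IS) :=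
  fun h' => not_smay_single u hu ((h {(u, true)}).1.mpr h')

lemma run_complete : ∀ (s : List (LSym 1)) (C : Store 1),
    (¬∃ r1 r2, s = r1 ++ (LOp.put, (0:Fin 1)) :: (LOp.put, (0:Fin 1)) :: r2) →
    ((∃ u, s = (LOp.put, (0:Fin 1)) :: u) → C 0 = false) →
    ∃ f, Relation.ReflTransGen LockStep (({(s, true)} : LProc 1), C)
      (({([], true)} : LProc 1), f) := by
  intro s
  induction s with
  | nil => intro C _ _; exact ⟨C, .refl⟩
  | cons a u ih =>
    intro C hnpp hstart
    obtain ⟨op, i⟩ := a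
    have hi : i = 0 := Subsingleton.elim _ _
    subst hi
    cases op with
    | take =>
      have step : LockStep (({((LOp.take, (0:Fin 1)) :: u, true)} : LProc 1), C)
          (({(u, true)} : LProc 1), Function.update C 0 false) :=
        ⟨0, u, true, 0, Or.inr ⟨rfl, rfl, rfl⟩⟩
      obtain ⟨f, hf⟩ := ih (Function.update C 0 false)
        (fun ⟨r1, r2, h⟩ => hnpp ⟨(LOp.take, 0) :: r1, r2, by simp [h]⟩)
        (fun _ => by simp)
      exact ⟨f, .head step hf⟩
    | put =>
      have hC : C 0 = false := hstart ⟨u, rfl⟩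
      have step : LockStep (({((LOp.put, (0:Fin 1)) :: u, true)} : LProc 1), C)
          (({(u, true)} : LProc 1), Function.update C 0 true) :=
        ⟨0, u, true, 0, Or.inl ⟨rfl, hC, rfl, rfl⟩⟩
      obtain ⟨f, hf⟩ := ih (Function.update C 0 true)
        (fun ⟨r1, r2, h⟩ => hnpp ⟨(LOp.put, 0) :: r1, r2, by simp [h]⟩)
        (fun ⟨v, hv⟩ => (hnpp ⟨[], v, by rw [hv]; rfl⟩).elim)
      exact ⟨f, .head step hf⟩

lemma shape_of_not_lmay (IS : Store 1) (s : List (LSym 1))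
    (h : ¬ LMayConv (({(s, true)} : LProc 1), IS)) : StartsPutOrPP s := by
  by_contra hn
  rw [StartsPutOrPP, not_or] at hn
  obtain ⟨h1, h2⟩ := hn
  obtain ⟨f, hf⟩ := run_complete s IS h2 (fun hu => (h1 hu).elim)
  exact h ⟨_, hf, by simp [LSuccessful]⟩

/-- for `k = 1`, if `τ` is a correct compositional translation then
both `τ(!)` and `τ(?)` either start with `P_1` or contain the factor `P_1 P_1`. -/
theorem one_lock_blocking_shape :
    ∀ (IS : Store 1) (tb tq : List (LSym 1)),
      Correct IS tb tq → StartsPutOrPP tb ∧ StartsPutOrPP tq := by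
  intro IS tb tq h
  constructor
  · apply shape_of_not_lmay IS tb
    have := not_lmay IS tb tq h [SSym.bang] (by simp)
    simpa [transProc, transSub] using this
  · apply shape_of_not_lmay IS tq
    have := not_lmay IS tb tq h [SSym.ques] (by simp)
    simpa [transProc, transSub] using this
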